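/- arXiv:alg-geom/9611032 — 6 statements merged into one kernel-verified Lean document; each statement's English description precedes it below -/
import Mathlib

section
/- Let f be a holomorphic function on ℍ (depending only on τ) and g a holomorphic function on ℍ×ℂ. Then for each non-negative integer r and each non-negative integer m, L_m^r(fg) = Σ_{j=0}^r (8πim)^{r−j} binom(r,j) (∂_τ^{r−j} f) · (L_m^j g), where fg denotes the function (τ,z) ↦ f(τ)g(τ,z). -/
open Complex Real Finset

noncomputable section

/-- The upper half plane, as a subset of `ℂ`. -/
def UHP : Set ℂ := {τ : ℂ | 0 < τ.im}

/-- Partial derivative with respect to the first variable `τ`. -/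
def dTau (f : ℂ → ℂ → ℂ) : ℂ → ℂ → ℂ := fun τ z => deriv (fun w => f w z) τ

/-- Partial derivative with respect to the second variable `z`. -/
def dZ (f : ℂ → ℂ → ℂ) : ℂ → ℂ → ℂ := fun τ z => deriv (fun w => f τ w) z

/-- The heat operator `L_m = 8πim ∂/∂τ − ∂²/∂z²`. -/
def heatOp (m : ℤ) (f : ℂ → ℂ → ℂ) : ℂ → ℂ → ℂ :=
  fun τ z => 8 * (π : ℂ) * I * (m : ℂ) * dTau f τ z - dZ (dZ f) τ z

/-- The weight `k`, index `m` slash action of `SL(2,ℤ)` on functions `ℍ × ℂ → ℂ`. -/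
def jacobiSlash (k m : ℤ) (M : Matrix.SpecialLinearGroup (Fin 2) ℤ) (f : ℂ → ℂ → ℂ) :
    ℂ → ℂ → ℂ := fun τ z =>
  ((M.1 1 0 : ℂ) * τ + (M.1 1 1 : ℂ)) ^ (-k) *
    Complex.exp (2 * (π : ℂ) * I * (m : ℂ) *
      (-((M.1 1 0 : ℂ) * z ^ 2) / ((M.1 1 0 : ℂ) * τ + (M.1 1 1 : ℂ)))) *
    f (((M.1 0 0 : ℂ) * τ + (M.1 0 1 : ℂ)) / ((M.1 1 0 : ℂ) * τ + (M.1 1 1 : ℂ)))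
      (z / ((M.1 1 0 : ℂ) * τ + (M.1 1 1 : ℂ)))

/-- The index `m` action of the lattice `ℤ²` on functions `ℍ × ℂ → ℂ`. -/
def latticeSlash (m : ℤ) (Y : ℤ × ℤ) (f : ℂ → ℂ → ℂ) : ℂ → ℂ → ℂ := fun τ z =>
  Complex.exp (2 * (π : ℂ) * I * (m : ℂ) * ((Y.1 : ℂ) ^ 2 * τ + 2 * (Y.1 : ℂ) * z)) *
    f τ (z + (Y.1 : ℂ) * τ + (Y.2 : ℂ))

/-- A Jacobi form of weight `k` and index `m`: a holomorphic function on `ℍ × ℂ`,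
invariant under both slash actions, with a Fourier expansion supported on
`n ≥ 0`, `r² ≤ 4nm`. -/
structure IsJacobiForm (k m : ℤ) (f : ℂ → ℂ → ℂ) : Prop where
  holo : DifferentiableOn ℂ (fun p : ℂ × ℂ => f p.1 p.2) {p : ℂ × ℂ | 0 < p.1.im}
  slash_invariant : ∀ M : Matrix.SpecialLinearGroup (Fin 2) ℤ, ∀ τ ∈ UHP, ∀ z : ℂ,
    jacobiSlash k m M f τ z = f τ z
  lattice_invariant : ∀ Y : ℤ × ℤ, ∀ τ ∈ UHP, ∀ z : ℂ,
    latticeSlash m Y f τ z = f τ z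
  fourier : ∃ c : ℤ × ℤ → ℂ,
    (∀ n r : ℤ, (n < 0 ∨ 4 * n * m < r ^ 2) → c (n, r) = 0) ∧
    ∀ τ ∈ UHP, ∀ z : ℂ,
      f τ z = ∑' nr : ℤ × ℤ, c nr *
        Complex.exp (2 * (π : ℂ) * I * ((nr.1 : ℂ) * τ + (nr.2 : ℂ) * z))

/-- The falling factorial `(x)_n = x(x−1)⋯(x−n+1)`. -/
def ffall (x : ℂ) (n : ℕ) : ℂ := ∏ i ∈ Finset.range n, (x - (i : ℂ))

/-- The combinatorial coefficients `C_{r,s,p}` appearing in the Rankin-Cohen brackets. -/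
def Ccoef (α β γ : ℂ) (r s p : ℕ) : ℂ :=
  ffall (α + r + s + p) (s + p) / (r.factorial : ℂ) *
    (ffall (β + r + s + p) (r + p) / (s.factorial : ℂ)) *
    (ffall (-(γ + (r : ℂ) + s + p)) (r + s) / (p.factorial : ℂ))

/-- The Rankin-Cohen bracket `[f,f']_{X,v}` of two Jacobi forms. -/
def jacobiRC (k k' m m' : ℤ) (X : ℂ) (v : ℕ) (f f' : ℂ → ℂ → ℂ) : ℂ → ℂ → ℂ :=
  fun τ z =>
    ∑ r ∈ Finset.range (v / 2 + 1), ∑ s ∈ Finset.range (v / 2 + 1 - r),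
      ∑ i ∈ Finset.range (v % 2 + 1),
        Ccoef ((k : ℂ) - 3/2) ((k' : ℂ) - 3/2) ((k : ℂ) + (k' : ℂ) - 3/2 + ((v % 2 : ℕ) : ℂ))
            r s (v / 2 - r - s) *
          ((m : ℂ) ^ (v % 2 - i) * (-(m' : ℂ)) ^ i * (1 + (m : ℂ) * X) ^ s *
            (1 - (m' : ℂ) * X) ^ r) *
          (heatOp (m + m'))^[v / 2 - r - s]
            (fun τ' z' =>
              (heatOp m)^[r] (dZ^[i] f) τ' z' * (heatOp m')^[s] (dZ^[v % 2 - i] f') τ' z') τ z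


/-!
When `f` depends on `τ` only, `∂_z` does not see it, so the heat operator obeys the Leibniz rule
`L_m (f g) = 8πim f' g + f L_m g`. Iterating it and collecting terms with Pascal's rule gives the
formula, just as for `(A + B)^r` with the commuting operators `A = 8πim ∂_τ` acting on `f` and
`B = L_m` acting on `g`.

The analytic content is that every `L_m^j g` is again regular enough for the Leibniz rule and for
the additivity of `L_m`. Jointly continuous, separately holomorphic functions are closed under
`∂_τ` and `∂_z`: writing `∂_τ h` by Cauchy's formula on a small circle around `τ`, continuity
follows from the continuity of parametric integrals, and holomorphy in `z` from differentiation
under the integral sign; `∂_z` is the same with the variables swapped.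
-/

theorem isOpen_UHP : IsOpen UHP := isOpen_lt continuous_const Complex.continuous_im

section SeparatelyHolomorphic

open Function Metric Set Filter

theorem cderiv_eq_intervalIntegral {r : ℝ} (hr : 0 < r) (f : ℂ → ℂ) (τ : ℂ) :
    Complex.cderiv r f τ =
      ∫ θ in (0 : ℝ)..2 * π, (2 * π * circleMap 0 r θ)⁻¹ * f (circleMap τ r θ) := by
  rw [Complex.cderiv, circleIntegral, ← intervalIntegral.integral_smul]
  refine intervalIntegral.integral_congr fun θ _ => ?_
  have hθ : circleMap 0 r θ ≠ 0 := circleMap_ne_center hr.ne'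
  simp only [deriv_circleMap, circleMap_sub_center, smul_eq_mul]
  field_simp

theorem continuous_cauchyKernel {r : ℝ} (hr : 0 < r) :
    Continuous fun θ : ℝ => (2 * π * circleMap 0 r θ)⁻¹ :=
  (continuous_const.mul (continuous_circleMap 0 r)).inv₀ fun _ =>
    mul_ne_zero (by simp [Real.pi_ne_zero]) (circleMap_ne_center hr.ne')

structure SepHolomorphicOn (h : ℂ → ℂ → ℂ) (U V : Set ℂ) : Prop where
  continuousOn : ContinuousOn (uncurry h) (U ×ˢ V)
  differentiableOn_left : ∀ z ∈ V, DifferentiableOn ℂ (h · z) U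
  differentiableOn_right : ∀ τ ∈ U, DifferentiableOn ℂ (h τ) V

namespace SepHolomorphicOn

variable {h : ℂ → ℂ → ℂ} {U V : Set ℂ}

theorem of_differentiableOn (hh : DifferentiableOn ℂ (uncurry h) (U ×ˢ V)) :
    SepHolomorphicOn h U V where
  continuousOn := hh.continuousOn
  differentiableOn_left z hz :=
    hh.comp (differentiableOn_id.prodMk (differentiableOn_const z)) fun _ hw => ⟨hw, hz⟩
  differentiableOn_right τ hτ :=
    hh.comp ((differentiableOn_const τ).prodMk differentiableOn_id) fun _ hz => ⟨hτ, hz⟩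

protected theorem flip (H : SepHolomorphicOn h U V) : SepHolomorphicOn (flip h) V U where
  continuousOn := H.continuousOn.comp continuous_swap.continuousOn fun _ hp => ⟨hp.2, hp.1⟩
  differentiableOn_left := H.differentiableOn_right
  differentiableOn_right := H.differentiableOn_left

theorem mul_left {f : ℂ → ℂ} (hf : DifferentiableOn ℂ f U) (H : SepHolomorphicOn h U V) :
    SepHolomorphicOn (fun τ z => f τ * h τ z) U V where
  continuousOn := (hf.continuousOn.comp continuousOn_fst fun _ hp => hp.1).mul H.continuousOn
  differentiableOn_left z hz := hf.mul (H.differentiableOn_left z hz)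
  differentiableOn_right τ hτ := (H.differentiableOn_right τ hτ).const_mul (f τ)

theorem sub {h' : ℂ → ℂ → ℂ} (H : SepHolomorphicOn h U V) (H' : SepHolomorphicOn h' U V) :
    SepHolomorphicOn (fun τ z => h τ z - h' τ z) U V where
  continuousOn := H.continuousOn.sub H'.continuousOn
  differentiableOn_left z hz :=
    (H.differentiableOn_left z hz).sub (H'.differentiableOn_left z hz)
  differentiableOn_right τ hτ :=
    (H.differentiableOn_right τ hτ).sub (H'.differentiableOn_right τ hτ)

theorem continuousOn_cderiv (H : SepHolomorphicOn h U V) {r : ℝ} (hr : 0 < r) {S : Set ℂ}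
    (hS : ∀ τ ∈ S, sphere τ r ⊆ U) :
    ContinuousOn (fun p : ℂ × ℂ => Complex.cderiv r (h · p.2) p.1) (S ×ˢ V) := by
  simp only [cderiv_eq_intervalIntegral hr]
  rw [continuousOn_iff_continuous_domRestrict]
  refine intervalIntegral.continuous_parametric_intervalIntegral_of_continuous' ?_ _ _
  refine ((continuous_cauchyKernel hr).comp continuous_snd).mul (H.continuousOn.comp_continuous
    (f := fun a : (S ×ˢ V) × ℝ => (circleMap a.1.1.1 r a.2, a.1.1.2)) ?_ ?_)
  · unfold circleMap
    fun_prop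
  · rintro ⟨⟨p, hp⟩, θ⟩
    exact ⟨hS p.1 hp.1 (circleMap_mem_sphere _ hr.le θ), hp.2⟩

theorem continuousOn_dTau (H : SepHolomorphicOn h U V) (hU : IsOpen U) :
    ContinuousOn (uncurry (dTau h)) (U ×ˢ V) := by
  rintro ⟨τ₀, z₀⟩ ⟨hτ₀, hz₀⟩
  obtain ⟨ε, hε, hball⟩ := Metric.isOpen_iff.mp hU τ₀ hτ₀
  have hsub : ∀ τ ∈ ball τ₀ (ε / 2), closedBall τ (ε / 2) ⊆ U := fun τ hτ =>
    (closedBall_subset_ball' (by rw [mem_ball] at hτ; linarith)).trans hball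
  have hcderiv := H.continuousOn_cderiv (half_pos hε)
    fun τ hτ => sphere_subset_closedBall.trans (hsub τ hτ)
  have heq : EqOn (fun p : ℂ × ℂ => Complex.cderiv (ε / 2) (h · p.2) p.1) (uncurry (dTau h))
      (ball τ₀ (ε / 2) ×ˢ V) := fun p hp =>
    Complex.cderiv_eq_deriv hU (H.differentiableOn_left p.2 hp.2) (half_pos hε) (hsub p.1 hp.1)
  refine ((hcderiv.congr heq.symm) (τ₀, z₀) ⟨mem_ball_self (half_pos hε), hz₀⟩)
    |>.mono_of_mem_nhdsWithin ?_
  exact mem_nhdsWithin.mpr ⟨ball τ₀ (ε / 2) ×ˢ univ, isOpen_ball.prod isOpen_univ,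
    ⟨mem_ball_self (half_pos hε), trivial⟩, fun p hp => ⟨hp.1.1, hp.2.2⟩⟩

theorem continuousOn_dZ (H : SepHolomorphicOn h U V) (hV : IsOpen V) :
    ContinuousOn (uncurry (dZ h)) (U ×ˢ V) :=
  (H.flip.continuousOn_dTau hV).comp continuous_swap.continuousOn fun _ hp => ⟨hp.2, hp.1⟩

theorem differentiableOn_dTau_right (H : SepHolomorphicOn h U V) (hU : IsOpen U) (hV : IsOpen V)
    {τ : ℂ} (hτ : τ ∈ U) : DifferentiableOn ℂ (dTau h τ) V := by
  intro z₀ hz₀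
  obtain ⟨r, hr, hτball⟩ := nhds_basis_closedBall.mem_iff.mp (hU.mem_nhds hτ)
  obtain ⟨ε, hε, hzball⟩ := nhds_basis_closedBall.mem_iff.mp (hV.mem_nhds hz₀)
  set k : ℝ → ℂ := fun θ => (2 * π * circleMap 0 r θ)⁻¹
  have hcircle : ∀ θ, circleMap τ r θ ∈ U := fun θ =>
    hτball (sphere_subset_closedBall (circleMap_mem_sphere τ hr.le θ))
  have hrep : ∀ z ∈ V, dTau h τ z = ∫ θ in (0 : ℝ)..2 * π, k θ * h (circleMap τ r θ) z :=
    fun z hz => (Complex.cderiv_eq_deriv hU (H.differentiableOn_left z hz) hr hτball).symm.trans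
      (cderiv_eq_intervalIntegral hr _ τ)
  have hcont : ∀ z ∈ V, Continuous fun θ => k θ * h (circleMap τ r θ) z := fun z hz =>
    (continuous_cauchyKernel hr).mul <|
      (H.differentiableOn_left z hz).continuousOn.comp_continuous (continuous_circleMap τ r) hcircle
  have hcont' : Continuous fun θ => k θ * dZ h (circleMap τ r θ) z₀ :=
    (continuous_cauchyKernel hr).mul <| (H.continuousOn_dZ hV).comp_continuous
      ((continuous_circleMap τ r).prodMk continuous_const) fun θ => ⟨hcircle θ, hz₀⟩
  obtain ⟨C, hC⟩ := (isCompact_sphere τ r |>.prod (isCompact_closedBall z₀ ε))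
    |>.exists_bound_of_continuousOn
      ((H.continuousOn_dZ hV).mono (prod_mono (sphere_subset_closedBall.trans hτball) hzball))
  have hderiv := intervalIntegral.hasDerivAt_integral_of_dominated_loc_of_deriv_le
    (μ := MeasureTheory.volume) (a := 0) (b := 2 * π)
    (F' := fun z θ => k θ * dZ h (circleMap τ r θ) z) (bound := fun θ => ‖k θ‖ * C)
    (ball_mem_nhds z₀ hε)
    (eventually_of_mem (hV.mem_nhds hz₀) fun z hz => (hcont z hz).aestronglyMeasurable)
    ((hcont z₀ hz₀).intervalIntegrable _ _) hcont'.aestronglyMeasurable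
    (MeasureTheory.ae_of_all _ fun θ _ z hz => by
      rw [norm_mul]
      exact mul_le_mul_of_nonneg_left
        (hC (_, z) ⟨circleMap_mem_sphere τ hr.le θ, ball_subset_closedBall hz⟩) (norm_nonneg _))
    (((continuous_cauchyKernel hr).norm.mul continuous_const).intervalIntegrable _ _)
    (MeasureTheory.ae_of_all _ fun θ _ z hz =>
      ((H.differentiableOn_right _ (hcircle θ)).differentiableAt
        (hV.mem_nhds (hzball (ball_subset_closedBall hz)))).hasDerivAt.const_mul (k θ))
  exact (hderiv.2.differentiableAt.congr_of_eventuallyEq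
    (eventually_of_mem (hV.mem_nhds hz₀) hrep)).differentiableWithinAt

protected theorem dTau (H : SepHolomorphicOn h U V) (hU : IsOpen U) (hV : IsOpen V) :
    SepHolomorphicOn (dTau h) U V where
  continuousOn := H.continuousOn_dTau hU
  differentiableOn_left z hz := (H.differentiableOn_left z hz).deriv hU
  differentiableOn_right _ hτ := H.differentiableOn_dTau_right hU hV hτ

-- `dZ h` is definitionally `flip (dTau (flip h))`.
protected theorem dZ (H : SepHolomorphicOn h U V) (hU : IsOpen U) (hV : IsOpen V) :
    SepHolomorphicOn (dZ h) U V :=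
  (H.flip.dTau hV hU).flip

end SepHolomorphicOn

end SeparatelyHolomorphic

section HeatOperator

open Function Set Filter

variable {U : Set ℂ} (m : ℤ)

theorem heatOp_congr (hU : IsOpen U) {F G : ℂ → ℂ → ℂ} (hFG : ∀ τ ∈ U, ∀ z, F τ z = G τ z) :
    ∀ τ ∈ U, ∀ z, heatOp m F τ z = heatOp m G τ z := by
  intro τ hτ z
  have hτ' : dTau F τ z = dTau G τ z :=
    EventuallyEq.deriv_eq (eventually_of_mem (hU.mem_nhds hτ) fun w hw => hFG w hw z)
  have hz : F τ = G τ := funext (hFG τ hτ)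
  simp only [heatOp, hτ', dZ, hz]

theorem heatOp_iterate_congr (hU : IsOpen U) (k : ℕ) {F G : ℂ → ℂ → ℂ}
    (hFG : ∀ τ ∈ U, ∀ z, F τ z = G τ z) :
    ∀ τ ∈ U, ∀ z, (heatOp m)^[k] F τ z = (heatOp m)^[k] G τ z := by
  induction k generalizing F G with
  | zero => exact hFG
  | succ k ih => exact ih (heatOp_congr m hU hFG)

theorem heatOp_add {A B : ℂ → ℂ → ℂ} {τ z : ℂ} (hAτ : DifferentiableAt ℂ (A · z) τ)
    (hBτ : DifferentiableAt ℂ (B · z) τ) (hAz : Differentiable ℂ (A τ))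
    (hBz : Differentiable ℂ (B τ)) :
    heatOp m (A + B) τ z = heatOp m A τ z + heatOp m B τ z := by
  have hτ' : dTau (A + B) τ z = dTau A τ z + dTau B τ z := deriv_add hAτ hBτ
  have hz : dZ (A + B) τ = dZ A τ + dZ B τ := funext fun w => deriv_add (hAz w) (hBz w)
  have hzz : dZ (dZ (A + B)) τ z = dZ (dZ A) τ z + dZ (dZ B) τ z := by
    change deriv (dZ (A + B) τ) z = _
    rw [hz]
    exact deriv_add (hAz.deriv z) (hBz.deriv z)
  simp only [heatOp, hτ', hzz]
  ring

theorem heatOp_mul_left {f : ℂ → ℂ} {h : ℂ → ℂ → ℂ} {τ z : ℂ} (hf : DifferentiableAt ℂ f τ)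
    (hh : DifferentiableAt ℂ (h · z) τ) :
    heatOp m (fun τ z => f τ * h τ z) τ z =
      8 * π * I * m * deriv f τ * h τ z + f τ * heatOp m h τ z := by
  have hτ' : dTau (fun τ z => f τ * h τ z) τ z = deriv f τ * h τ z + f τ * dTau h τ z :=
    deriv_mul hf hh
  have hzz : dZ (dZ fun τ z => f τ * h τ z) τ z = f τ * dZ (dZ h) τ z := by
    simp only [dZ, deriv_const_mul_field']
  simp only [heatOp, hτ', hzz]
  ring

namespace SepHolomorphicOn

variable {h : ℂ → ℂ → ℂ}

protected theorem heatOp (H : SepHolomorphicOn h U univ) (hU : IsOpen U) :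
    SepHolomorphicOn (heatOp m h) U univ :=
  ((H.dTau hU isOpen_univ).mul_left (differentiableOn_const _)).sub
    ((H.dZ hU isOpen_univ).dZ hU isOpen_univ)

theorem differentiableAt_left (H : SepHolomorphicOn h U univ) (hU : IsOpen U) {τ : ℂ}
    (hτ : τ ∈ U) (z : ℂ) : DifferentiableAt ℂ (h · z) τ :=
  (H.differentiableOn_left z trivial).differentiableAt (hU.mem_nhds hτ)

theorem differentiable_right (H : SepHolomorphicOn h U univ) {τ : ℂ} (hτ : τ ∈ U) :
    Differentiable ℂ (h τ) :=
  differentiableOn_univ.mp (H.differentiableOn_right τ hτ)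

end SepHolomorphicOn

theorem heatOp_iterate_add (hU : IsOpen U) (k : ℕ) {A B : ℂ → ℂ → ℂ}
    (hA : SepHolomorphicOn A U univ) (hB : SepHolomorphicOn B U univ) :
    ∀ τ ∈ U, ∀ z,
      (heatOp m)^[k] (A + B) τ z = (heatOp m)^[k] A τ z + (heatOp m)^[k] B τ z := by
  induction k generalizing A B with
  | zero => exact fun _ _ _ => rfl
  | succ k ih =>
    intro τ hτ z
    have hsplit : ∀ τ ∈ U, ∀ z, heatOp m (A + B) τ z = (heatOp m A + heatOp m B) τ z :=
      fun τ hτ z => heatOp_add m (hA.differentiableAt_left hU hτ z)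
        (hB.differentiableAt_left hU hτ z) (hA.differentiable_right hτ)
        (hB.differentiable_right hτ)
    simp only [iterate_succ_apply]
    rw [heatOp_iterate_congr m hU k hsplit τ hτ z]
    exact ih (hA.heatOp m hU) (hB.heatOp m hU) τ hτ z

theorem heatOp_iterate_mul_left (hU : IsOpen U) (r : ℕ) {f : ℂ → ℂ} {h : ℂ → ℂ → ℂ}
    (hf : DifferentiableOn ℂ f U) (H : SepHolomorphicOn h U univ) :
    ∀ τ ∈ U, ∀ z, (heatOp m)^[r] (fun τ z => f τ * h τ z) τ z =
      ∑ j ∈ range (r + 1), (r.choose j : ℂ) *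
        ((8 * π * I * m) ^ (r - j) * deriv^[r - j] f τ * (heatOp m)^[j] h τ z) := by
  induction r generalizing f h with
  | zero => intro τ _ z; simp
  | succ n ih =>
    intro τ hτ z
    set c : ℂ := 8 * π * I * m
    have hf' : DifferentiableOn ℂ (fun w => c * deriv f w) U := (hf.deriv hU).const_mul c
    have hLh := H.heatOp m hU
    have hproduct : ∀ τ ∈ U, ∀ z, heatOp m (fun τ z => f τ * h τ z) τ z =
        ((fun τ z => c * deriv f τ * h τ z) + fun τ z => f τ * heatOp m h τ z) τ z :=
      fun τ hτ z => heatOp_mul_left m (hf.differentiableAt (hU.mem_nhds hτ))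
        (H.differentiableAt_left hU hτ z)
    have hderiv : ∀ k, deriv^[k] (fun w => c * deriv f w) τ = c * deriv^[k + 1] f τ := by
      intro k
      rw [← iteratedDeriv_eq_iterate, iteratedDeriv_const_mul_field, iteratedDeriv_eq_iterate]
      rfl
    rw [iterate_succ_apply, heatOp_iterate_congr m hU n hproduct τ hτ z,
      heatOp_iterate_add m hU n (.mul_left hf' H) (.mul_left hf hLh) τ hτ z,
      ih hf' H τ hτ z, ih hf hLh τ hτ z]
    refine Eq.trans ?_ (sum_choose_succ_mul
      (fun j k => c ^ k * deriv^[k] f τ * (heatOp m)^[j] h τ z) n).symm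
    congr 1
    refine sum_congr rfl fun j hj => ?_
    rw [hderiv, show n + 1 - j = n - j + 1 by have := mem_range.mp hj; omega]
    ring

end HeatOperator

/-- **Product rule for powers of the heat operator** (Lemma 1 of Choie-Eholzer):
if `f` is holomorphic on `ℍ` (depending only on `τ`) and `g` is holomorphic on `ℍ × ℂ`, then
`L_m^r(fg) = Σ_{j=0}^r (8πim)^{r−j} C(r,j) (∂_τ^{r−j} f)(L_m^j g)`. -/
theorem heatOp_iterate_mul (f : ℂ → ℂ) (g : ℂ → ℂ → ℂ)
    (hf : DifferentiableOn ℂ f UHP)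
    (hg : DifferentiableOn ℂ (fun p : ℂ × ℂ => g p.1 p.2) {p : ℂ × ℂ | 0 < p.1.im})
    (r : ℕ) (m : ℕ) (τ : ℂ) (hτ : τ ∈ UHP) (z : ℂ) :
    (heatOp (m : ℤ))^[r] (fun τ' z' => f τ' * g τ' z') τ z =
      ∑ j ∈ Finset.range (r + 1),
        (8 * (π : ℂ) * I * (m : ℂ)) ^ (r - j) * (r.choose j : ℂ) *
          deriv^[r - j] f τ * (heatOp (m : ℤ))^[j] g τ z := by
  have hg' : SepHolomorphicOn g UHP Set.univ :=
    .of_differentiableOn (by rw [Set.prod_univ]; exact hg)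
  rw [heatOp_iterate_mul_left m isOpen_UHP r hf hg' τ hτ z]
  refine sum_congr rfl fun j _ => ?_
  push_cast
  ring

end
end

section
/- Let f be a holomorphic function on ℍ×ℂ and m an integer. Then the heat operator commutes with the index-m lattice action: L_m(f)|_m Y = L_m(f|_m Y) for all Y ∈ ℤ². -/
open Complex Real Finset

noncomputable section

/-!
Write `c = 2πim`, so that `L_m = 4c ∂_τ − ∂_z²`, and `f|_m Y = e · (f ∘ σ)` with
`e(τ, z) = exp(c(λ²τ + 2λz))` and the shear `σ(τ, z) = (τ, z + λτ + ν)`.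
The Leibniz rule gives `L_m(e g) = (L_m e) g + e L_m g − 2 e_z g_z`, and the automorphy factor
solves the heat equation, `L_m e = 0`, with `e_z = 2cλ e`. The chain rule gives
`L_m(f ∘ σ) = (L_m f) ∘ σ + 4cλ (f_z ∘ σ)`, and this extra term is exactly cancelled by
`−2 e_z (f ∘ σ)_z = −4cλ e (f_z ∘ σ)`.
-/

def latticeFactor (m : ℤ) (l : ℂ) : ℂ → ℂ → ℂ := fun τ z =>
  cexp (2 * π * I * m * (l ^ 2 * τ + 2 * l * z))

lemma latticeSlash_eq_latticeFactor_mul (m : ℤ) (Y : ℤ × ℤ) (f : ℂ → ℂ → ℂ) :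
    latticeSlash m Y f = fun τ z => latticeFactor m Y.1 τ z * f τ (z + Y.1 * τ + Y.2) :=
  rfl

section latticeFactor

variable (m : ℤ) (l τ z : ℂ)

lemma hasDerivAt_latticeFactor_left :
    HasDerivAt (fun t => latticeFactor m l t z)
      (2 * π * I * m * l ^ 2 * latticeFactor m l τ z) τ :=
  ((((hasDerivAt_id τ).const_mul (l ^ 2)).add_const (2 * l * z)).const_mul
    (2 * π * I * m : ℂ)).cexp.congr_deriv (by simp only [latticeFactor, id]; ring)

lemma hasDerivAt_latticeFactor_right :
    HasDerivAt (latticeFactor m l τ) (4 * π * I * m * l * latticeFactor m l τ z) z :=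
  ((((hasDerivAt_id z).const_mul (2 * l)).const_add (l ^ 2 * τ)).const_mul
    (2 * π * I * m : ℂ)).cexp.congr_deriv (by simp only [latticeFactor, id]; ring)

lemma dZ_latticeFactor :
    dZ (latticeFactor m l) τ z = 4 * π * I * m * l * latticeFactor m l τ z :=
  (hasDerivAt_latticeFactor_right m l τ z).deriv

lemma heatOp_latticeFactor : heatOp m (latticeFactor m l) τ z = 0 := by
  have hτ : dTau (latticeFactor m l) τ z = 2 * π * I * m * l ^ 2 * latticeFactor m l τ z :=
    (hasDerivAt_latticeFactor_left m l τ z).deriv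
  have hzz : dZ (dZ (latticeFactor m l)) τ z =
      4 * π * I * m * l * (4 * π * I * m * l * latticeFactor m l τ z) := by
    have h : dZ (latticeFactor m l) τ = fun w => 4 * π * I * m * l * latticeFactor m l τ w :=
      funext (dZ_latticeFactor m l τ)
    exact (h ▸ ((hasDerivAt_latticeFactor_right m l τ z).const_mul _)).deriv
  simp only [heatOp, hτ, hzz]
  ring

end latticeFactor

section product

variable {u v : ℂ → ℂ → ℂ} {τ z : ℂ}

lemma dTau_mul (hu : DifferentiableAt ℂ (fun t => u t z) τ)
    (hv : DifferentiableAt ℂ (fun t => v t z) τ) :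
    dTau (fun t w => u t w * v t w) τ z = dTau u τ z * v τ z + u τ z * dTau v τ z :=
  deriv_mul hu hv

lemma dZ_mul (hu : Differentiable ℂ (u τ)) (hv : Differentiable ℂ (v τ)) :
    dZ (fun t w => u t w * v t w) τ = fun w => dZ u τ w * v τ w + u τ w * dZ v τ w :=
  funext fun w => deriv_mul (hu w) (hv w)

lemma dZ_dZ_mul (hu : Differentiable ℂ (u τ)) (hv : Differentiable ℂ (v τ)) :
    dZ (dZ (fun t w => u t w * v t w)) τ z =
      dZ (dZ u) τ z * v τ z + 2 * dZ u τ z * dZ v τ z + u τ z * dZ (dZ v) τ z := by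
  change deriv (dZ (fun t w => u t w * v t w) τ) z = _
  rw [dZ_mul hu hv]
  refine (((hu.deriv z).hasDerivAt.mul (hv z).hasDerivAt).add
    ((hu z).hasDerivAt.mul (hv.deriv z).hasDerivAt)).deriv.trans ?_
  simp only [dZ]
  ring

lemma heatOp_mul (m : ℤ) (huτ : DifferentiableAt ℂ (fun t => u t z) τ)
    (hvτ : DifferentiableAt ℂ (fun t => v t z) τ)
    (hu : Differentiable ℂ (u τ)) (hv : Differentiable ℂ (v τ)) :
    heatOp m (fun t w => u t w * v t w) τ z =
      heatOp m u τ z * v τ z + u τ z * heatOp m v τ z - 2 * dZ u τ z * dZ v τ z := by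
  simp only [heatOp, dTau_mul huτ hvτ, dZ_dZ_mul hu hv]
  ring

end product

section shear

variable (f : ℂ → ℂ → ℂ) (a b : ℂ)

lemma dZ_comp_shear :
    dZ (fun t w => f t (w + a * t + b)) = fun t w => dZ f t (w + a * t + b) := by
  funext t w
  simp only [dZ, add_assoc]
  exact deriv_comp_add_const (f t) (a * t + b) w

lemma hasDerivAt_comp_shear {τ z : ℂ}
    (hf : DifferentiableAt ℂ (fun p : ℂ × ℂ => f p.1 p.2) (τ, z + a * τ + b)) :
    HasDerivAt (fun t => f t (z + a * t + b))
      (dTau f τ (z + a * τ + b) + a * dZ f τ (z + a * τ + b)) τ := by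
  set w := z + a * τ + b
  obtain ⟨L, hL⟩ := hf
  have hτ : dTau f τ w = L (1, 0) := by
    have h := hL.comp_hasDerivAt τ ((hasDerivAt_id τ).prodMk (hasDerivAt_const τ w))
    exact h.deriv
  have hz : dZ f τ w = L (0, 1) := by
    have h := hL.comp_hasDerivAt w ((hasDerivAt_const w τ).prodMk (hasDerivAt_id w))
    exact h.deriv
  have hshear : HasDerivAt (fun t : ℂ => (t, z + a * t + b)) ((1 : ℂ), a) τ :=
    (hasDerivAt_id τ).prodMk ((((hasDerivAt_id τ).const_mul a).const_add z).add_const b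
      |>.congr_deriv (mul_one a))
  have hL1a : L (1, a) = L (1, 0) + a * L (0, 1) := by
    rw [← smul_eq_mul, ← map_smul, ← map_add]
    simp
  rw [hτ, hz, ← hL1a]
  exact hL.comp_hasDerivAt τ hshear

lemma heatOp_comp_shear (m : ℤ) {τ z : ℂ}
    (hf : DifferentiableAt ℂ (fun p : ℂ × ℂ => f p.1 p.2) (τ, z + a * τ + b)) :
    heatOp m (fun t w => f t (w + a * t + b)) τ z =
      heatOp m f τ (z + a * τ + b) + 8 * π * I * m * a * dZ f τ (z + a * τ + b) := by
  have hτ : dTau (fun t w => f t (w + a * t + b)) τ z =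
      dTau f τ (z + a * τ + b) + a * dZ f τ (z + a * τ + b) :=
    (hasDerivAt_comp_shear f a b hf).deriv
  simp only [heatOp, hτ, dZ_comp_shear]
  ring

end shear

/-- **The heat operator commutes with the lattice action**
(Lemma 2 of Choie-Eholzer): for `f` holomorphic on `ℍ × ℂ` and any `Y ∈ ℤ²`,
`L_m(f)|_m Y = L_m(f|_m Y)`. -/
theorem heatOp_latticeSlash (f : ℂ → ℂ → ℂ)
    (hf : DifferentiableOn ℂ (fun p : ℂ × ℂ => f p.1 p.2) {p : ℂ × ℂ | 0 < p.1.im})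
    (m : ℤ) (Y : ℤ × ℤ) (τ : ℂ) (hτ : τ ∈ UHP) (z : ℂ) :
    latticeSlash m Y (heatOp m f) τ z = heatOp m (latticeSlash m Y f) τ z := by
  have hopen : IsOpen {p : ℂ × ℂ | 0 < p.1.im} :=
    isOpen_lt continuous_const (continuous_im.comp continuous_fst)
  have hfτ : ∀ w, DifferentiableAt ℂ (fun p : ℂ × ℂ => f p.1 p.2) (τ, w) := fun _ =>
    hf.differentiableAt (hopen.mem_nhds hτ)
  have hsheared : Differentiable ℂ (fun w => f τ (w + Y.1 * τ + Y.2)) := fun w =>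
    (hfτ _).comp (f := fun w : ℂ => (τ, w + Y.1 * τ + Y.2)) w (by fun_prop)
  rw [latticeSlash_eq_latticeFactor_mul, latticeSlash_eq_latticeFactor_mul,
    heatOp_mul m (hasDerivAt_latticeFactor_left m _ τ z).differentiableAt
      (hasDerivAt_comp_shear f _ _ (hfτ _)).differentiableAt
      (fun w => (hasDerivAt_latticeFactor_right m _ τ w).differentiableAt) hsheared,
    heatOp_latticeFactor, heatOp_comp_shear f _ _ m (hfτ _), dZ_comp_shear, dZ_latticeFactor]
  ring
end
end

section
/- Let f and f' be holomorphic functions on ℍ×ℂ and let k, m, k', m' be integers. Then for every M ∈ SL(2,ℤ): ( m'(∂_z f)·f' − m·f·(∂_z f') )|_{k+k'+1, m+m'} M = m'(∂_z(f|_{k,m}M))·(f'|_{k',m'}M) − m·(f|_{k,m}M)·(∂_z(f'|_{k',m'}M)). -/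
open Complex Real Finset

noncomputable section

/-!
Write `f|_{k,m}M (τ, z) = J_{k,m}(τ, z) · f(Mτ, z/(cτ+d))`. Differentiating in `z` gives
`(∂_z f)(Mτ, z/(cτ+d)) / (cτ+d)` plus the anomalous term `-4πi m c z/(cτ+d) · f|_{k,m}M`, whose
coefficient is linear in the index `m`. In `m'(∂_z f) f' - m f (∂_z f')` the anomalous terms
therefore cancel, and the factors combine as `J_{k,m} J_{k',m'} / (cτ+d) = J_{k+k'+1,m+m'}`.
-/

open Filter Topology

lemma DifferentiableOn.differentiableAt_of_uncurry {𝕜 E F G : Type*} [NontriviallyNormedField 𝕜]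
    [NormedAddCommGroup E] [NormedSpace 𝕜 E] [NormedAddCommGroup F] [NormedSpace 𝕜 F]
    [NormedAddCommGroup G] [NormedSpace 𝕜 G] {f : E → F → G} {s : Set (E × F)} {w : E} {z : F}
    (hf : DifferentiableOn 𝕜 (fun p : E × F => f p.1 p.2) s) (hs : s ∈ 𝓝 (w, z)) :
    DifferentiableAt 𝕜 (f w) z :=
  (hf.differentiableAt hs).comp z ((differentiableAt_const w).prodMk differentiableAt_id)

section Moebius

variable (M : Matrix.SpecialLinearGroup (Fin 2) ℤ)

def moebiusDenom (τ : ℂ) : ℂ := (M.1 1 0 : ℂ) * τ + M.1 1 1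

def moebius (τ : ℂ) : ℂ := ((M.1 0 0 : ℂ) * τ + M.1 0 1) / moebiusDenom M τ

variable {M}

open UpperHalfPlane in
lemma im_moebius_pos {τ : ℂ} (hτ : τ ∈ UHP) : 0 < (moebius M τ).im := by
  have h := (M • (⟨τ, hτ⟩ : ℍ)).im_pos
  rw [← coe_im, coe_specialLinearGroup_apply] at h
  simpa [moebius, moebiusDenom] using h

lemma moebiusDenom_ne_zero {τ : ℂ} (hτ : τ ∈ UHP) : moebiusDenom M τ ≠ 0 := by
  intro h
  -- with a zero denominator `moebius M τ` would be the junk value `0`, which is not in `ℍ`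
  simpa [moebius, h] using im_moebius_pos (M := M) hτ

end Moebius

section Factor

variable (k m : ℤ) (M : Matrix.SpecialLinearGroup (Fin 2) ℤ) (τ : ℂ)

def jacobiFactor (z : ℂ) : ℂ :=
  moebiusDenom M τ ^ (-k) *
    Complex.exp (2 * (π : ℂ) * I * (m : ℂ) * (-((M.1 1 0 : ℂ) * z ^ 2) / moebiusDenom M τ))

lemma jacobiSlash_eq_jacobiFactor_mul (f : ℂ → ℂ → ℂ) (z : ℂ) :
    jacobiSlash k m M f τ z =
      jacobiFactor k m M τ z * f (moebius M τ) (z / moebiusDenom M τ) := rfl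

variable {τ}

lemma jacobiFactor_add (k' m' : ℤ) (hD : moebiusDenom M τ ≠ 0) (z : ℂ) :
    jacobiFactor (k + k') (m + m') M τ z = jacobiFactor k m M τ z * jacobiFactor k' m' M τ z := by
  rw [jacobiFactor, jacobiFactor, jacobiFactor, neg_add, zpow_add₀ hD, mul_mul_mul_comm,
    ← Complex.exp_add]
  congr 2
  push_cast
  ring

lemma jacobiFactor_one_zero (z : ℂ) : jacobiFactor 1 0 M τ z = (moebiusDenom M τ)⁻¹ := by
  simp [jacobiFactor]

lemma hasDerivAt_jacobiFactor (z : ℂ) :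
    HasDerivAt (jacobiFactor k m M τ)
      (jacobiFactor k m M τ z *
        -(4 * (π : ℂ) * I * (m : ℂ) * (M.1 1 0 : ℂ) * z / moebiusDenom M τ)) z := by
  have h := (((hasDerivAt_pow 2 z).const_mul (M.1 1 0 : ℂ)).neg.div_const (moebiusDenom M τ)
    |>.const_mul (2 * (π : ℂ) * I * (m : ℂ))).cexp.const_mul (moebiusDenom M τ ^ (-k))
  exact h.congr_deriv (by simp only [jacobiFactor, Pi.neg_apply]; ring)

lemma hasDerivAt_jacobiSlash {f : ℂ → ℂ → ℂ} {z : ℂ}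
    (hf : DifferentiableAt ℂ (f (moebius M τ)) (z / moebiusDenom M τ)) :
    HasDerivAt (jacobiSlash k m M f τ)
      (jacobiFactor k m M τ z *
        (-(4 * (π : ℂ) * I * (m : ℂ) * (M.1 1 0 : ℂ) * z / moebiusDenom M τ) *
            f (moebius M τ) (z / moebiusDenom M τ) +
          dZ f (moebius M τ) (z / moebiusDenom M τ) / moebiusDenom M τ)) z := by
  have h := (hasDerivAt_jacobiFactor k m M (τ := τ) z).mul
    (hf.hasDerivAt.comp z ((hasDerivAt_id z).div_const (moebiusDenom M τ)))
  exact h.congr_deriv (by simp only [dZ, Function.comp_apply, id]; ring)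

end Factor

/-- **Covariance of the first-order bracket under the `SL(2,ℤ)` slash action**
(Lemma 3 of Choie-Eholzer): for `f`, `f'` holomorphic on `ℍ × ℂ` and any `M ∈ SL(2,ℤ)`,
`(m'(∂_z f) f' − m f (∂_z f'))|_{k+k'+1,m+m'} M
  = m'(∂_z(f|_{k,m}M))(f'|_{k',m'}M) − m (f|_{k,m}M)(∂_z(f'|_{k',m'}M))`. -/
theorem odd_bracket_slash (f f' : ℂ → ℂ → ℂ)
    (hf : DifferentiableOn ℂ (fun p : ℂ × ℂ => f p.1 p.2) {p : ℂ × ℂ | 0 < p.1.im})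
    (hf' : DifferentiableOn ℂ (fun p : ℂ × ℂ => f' p.1 p.2) {p : ℂ × ℂ | 0 < p.1.im})
    (k m k' m' : ℤ) (M : Matrix.SpecialLinearGroup (Fin 2) ℤ)
    (τ : ℂ) (hτ : τ ∈ UHP) (z : ℂ) :
    jacobiSlash (k + k' + 1) (m + m') M
        (fun τ' z' => (m' : ℂ) * dZ f τ' z' * f' τ' z' - (m : ℂ) * f τ' z' * dZ f' τ' z')
        τ z =
      (m' : ℂ) * dZ (jacobiSlash k m M f) τ z * jacobiSlash k' m' M f' τ z -
        (m : ℂ) * jacobiSlash k m M f τ z * dZ (jacobiSlash k' m' M f') τ z := by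
  have hD := moebiusDenom_ne_zero (M := M) hτ
  have hUHP : {p : ℂ × ℂ | 0 < p.1.im} ∈ 𝓝 (moebius M τ, z / moebiusDenom M τ) :=
    (isOpen_lt continuous_const (by fun_prop)).mem_nhds (im_moebius_pos hτ)
  rw [dZ, dZ, (hasDerivAt_jacobiSlash k m M (hf.differentiableAt_of_uncurry hUHP)).deriv,
    (hasDerivAt_jacobiSlash k' m' M (hf'.differentiableAt_of_uncurry hUHP)).deriv]
  simp only [jacobiSlash_eq_jacobiFactor_mul]
  rw [← add_zero (m + m'), jacobiFactor_add _ _ _ _ _ hD, jacobiFactor_add _ _ _ _ _ hD,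
    jacobiFactor_one_zero]
  ring
end
end

section
/- Let n be a positive integer, A a complex symmetric n×n matrix, and Z a variable in the Siegel upper half-space ℍ_n. Then 𝔻( e^{πi tr(AZ)} ) = (2πi)^n det(A) e^{πi tr(AZ)}, where 𝔻 = det(∂_{ν,μ}) with ∂_{ν,μ} = (1+δ_{ν,μ}) ∂/∂z_{ν,μ} and Z = (z_{ν,μ}). -/
open Complex Real Finset Matrix

noncomputable section

/-- The Siegel upper half-space of degree `n`: complex symmetric `n × n` matrices
(written as functions `Fin n → Fin n → ℂ`) with positive definite imaginary part. -/
def siegelUHS (n : ℕ) : Set (Fin n → Fin n → ℂ) :=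
  {Z | (Matrix.of Z).IsSymm ∧ (Matrix.of fun i j => (Z i j).im).PosDef}

/-- The differential operator `∂_{ν,μ} = (1+δ_{ν,μ}) ∂/∂z_{ν,μ}` on functions of a
symmetric matrix variable `Z = (z_{ν,μ})`, realised as the directional derivative in
the direction `E_{ν,μ} + E_{μ,ν}`. -/
def pdOp (n : ℕ) (ν μ : Fin n) (F : (Fin n → Fin n → ℂ) → ℂ) :
    (Fin n → Fin n → ℂ) → ℂ := fun Z =>
  deriv (fun t : ℂ =>
    F (fun i j => Z i j + (if i = ν ∧ j = μ then t else 0) +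
        (if i = μ ∧ j = ν then t else 0))) 0

/-- The operator `𝔻 = det(∂_{ν,μ})`, the determinant of the matrix of differential
operators `∂_{ν,μ}`, expanded as `Σ_σ sgn(σ) ∂_{0,σ(0)} ∘ ⋯ ∘ ∂_{n-1,σ(n-1)}`. -/
def detOp (n : ℕ) (F : (Fin n → Fin n → ℂ) → ℂ) : (Fin n → Fin n → ℂ) → ℂ :=
  fun Z => ∑ σ : Equiv.Perm (Fin n),
    ((Equiv.Perm.sign σ : ℤ) : ℂ) *
      ((List.ofFn fun i : Fin n => pdOp n i (σ i)).foldr (fun op G => op G) F) Z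

lemma trace_shift (n : ℕ) (A : Matrix (Fin n) (Fin n) ℂ) (W : Fin n → Fin n → ℂ)
    (ν μ : Fin n) (t : ℂ) :
    Matrix.trace (A * Matrix.of (fun i j => W i j + (if i = ν ∧ j = μ then t else 0) +
        (if i = μ ∧ j = ν then t else 0))) =
      Matrix.trace (A * Matrix.of W) + (A μ ν + A ν μ) * t := by
  simp only [Matrix.trace, Matrix.diag, Matrix.mul_apply, Matrix.of_apply, mul_add,
    Finset.sum_add_distrib, ite_and, mul_ite, mul_zero, Finset.sum_ite_eq,
    Finset.sum_ite_eq', Finset.mem_univ, if_true]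
  ring

lemma pdOp_mul_exp (n : ℕ) (ν μ : Fin n) (A : Matrix (Fin n) (Fin n) ℂ) (c : ℂ) :
    pdOp n ν μ (fun W => c * Complex.exp ((π : ℂ) * I * Matrix.trace (A * Matrix.of W))) =
      fun W => (c * ((π : ℂ) * I * (A μ ν + A ν μ))) *
        Complex.exp ((π : ℂ) * I * Matrix.trace (A * Matrix.of W)) := by
  funext Z
  unfold pdOp
  have heq : (fun t : ℂ =>
      c * Complex.exp ((π : ℂ) * I * Matrix.trace (A * Matrix.of
        (fun i j => Z i j + (if i = ν ∧ j = μ then t else 0) +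
          (if i = μ ∧ j = ν then t else 0))))) =
      fun t : ℂ => c * Complex.exp ((π : ℂ) * I * Matrix.trace (A * Matrix.of Z) +
        ((π : ℂ) * I * (A μ ν + A ν μ)) * t) := by
    funext t
    rw [trace_shift]
    ring_nf
  rw [heq]
  have h : HasDerivAt (fun t : ℂ => c * Complex.exp ((π : ℂ) * I * Matrix.trace (A * Matrix.of Z) +
      ((π : ℂ) * I * (A μ ν + A ν μ)) * t))
      (c * (Complex.exp ((π : ℂ) * I * Matrix.trace (A * Matrix.of Z) +
        ((π : ℂ) * I * (A μ ν + A ν μ)) * 0) * (((π : ℂ) * I * (A μ ν + A ν μ)) * 1))) 0 :=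
    ((((hasDerivAt_id 0).const_mul _).const_add _).cexp).const_mul c
  rw [h.deriv]
  ring_nf

lemma foldr_pdOp (n : ℕ) (A : Matrix (Fin n) (Fin n) ℂ) (l : List (Fin n × Fin n)) (c : ℂ) :
    (l.map fun p => pdOp n p.1 p.2).foldr (fun op G => op G)
        (fun W => c * Complex.exp ((π : ℂ) * I * Matrix.trace (A * Matrix.of W))) =
      fun W => (c * (l.map fun p => (π : ℂ) * I * (A p.2 p.1 + A p.1 p.2)).prod) *
        Complex.exp ((π : ℂ) * I * Matrix.trace (A * Matrix.of W)) := by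
  induction l with
  | nil => simp
  | cons p l ih =>
      simp only [List.map_cons, List.foldr_cons, ih, List.prod_cons, pdOp_mul_exp]
      funext W
      ring

/-- **Action of the determinant differential operator on exponentials**
(Lemma 4 of Choie-Eholzer): for a complex symmetric `n × n` matrix `A` and `Z ∈ ℍ_n`,
`𝔻(e^{πi tr(AZ)}) = (2πi)^n det(A) e^{πi tr(AZ)}`. -/
theorem detOp_exp_trace (n : ℕ) (hn : 0 < n) (A : Matrix (Fin n) (Fin n) ℂ)
    (hA : A.IsSymm) (Z : Fin n → Fin n → ℂ) (hZ : Z ∈ siegelUHS n) :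
    detOp n (fun W => Complex.exp ((π : ℂ) * I * Matrix.trace (A * Matrix.of W))) Z =
      (2 * (π : ℂ) * I) ^ n * A.det *
        Complex.exp ((π : ℂ) * I * Matrix.trace (A * Matrix.of Z)) := by
  have hsymm : ∀ i j, A i j = A j i := fun i j => by
    conv_lhs => rw [← hA]
    rfl
  unfold detOp
  have hF : (fun W => Complex.exp ((π : ℂ) * I * Matrix.trace (A * Matrix.of W))) =
      fun W => (1 : ℂ) * Complex.exp ((π : ℂ) * I * Matrix.trace (A * Matrix.of W)) := by
    funext W; rw [one_mul]
  rw [hF]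
  have hlist : ∀ σ : Equiv.Perm (Fin n),
      (List.ofFn fun i : Fin n => pdOp n i (σ i)) =
        (List.ofFn fun i : Fin n => ((i, σ i) : Fin n × Fin n)).map
          (fun p => pdOp n p.1 p.2) := by
    intro σ
    rw [List.map_ofFn]
    rfl
  have key : ∀ σ : Equiv.Perm (Fin n),
      ((List.ofFn fun i : Fin n => pdOp n i (σ i)).foldr (fun op G => op G)
        (fun W => (1 : ℂ) * Complex.exp ((π : ℂ) * I * Matrix.trace (A * Matrix.of W)))) Z =
      ((2 * (π : ℂ) * I) ^ n * ∏ i, A (σ i) i) *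
        Complex.exp ((π : ℂ) * I * Matrix.trace (A * Matrix.of Z)) := by
    intro σ
    rw [hlist σ, foldr_pdOp]
    have : ((List.ofFn fun i : Fin n => ((i, σ i) : Fin n × Fin n)).map
        fun p => (π : ℂ) * I * (A p.2 p.1 + A p.1 p.2)).prod =
        (2 * (π : ℂ) * I) ^ n * ∏ i, A (σ i) i := by
      rw [List.map_ofFn, List.prod_ofFn]
      have : ∀ i : Fin n, ((fun p : Fin n × Fin n => (π : ℂ) * I * (A p.2 p.1 + A p.1 p.2)) ∘
          (fun i : Fin n => ((i, σ i) : Fin n × Fin n))) i =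
          (2 * (π : ℂ) * I) * A (σ i) i := by
        intro i
        simp only [Function.comp_apply]
        rw [hsymm i (σ i)]
        ring
      rw [Finset.prod_congr rfl (fun i _ => this i), Finset.prod_mul_distrib,
        Finset.prod_const, Finset.card_univ, Fintype.card_fin]
    simp only [this, one_mul]
  calc (∑ σ : Equiv.Perm (Fin n), ((Equiv.Perm.sign σ : ℤ) : ℂ) *
        ((List.ofFn fun i : Fin n => pdOp n i (σ i)).foldr (fun op G => op G)
          (fun W => (1 : ℂ) * Complex.exp ((π : ℂ) * I * Matrix.trace (A * Matrix.of W)))) Z)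
      = ∑ σ : Equiv.Perm (Fin n), ((Equiv.Perm.sign σ : ℤ) : ℂ) *
          (((2 * (π : ℂ) * I) ^ n * ∏ i, A (σ i) i) *
            Complex.exp ((π : ℂ) * I * Matrix.trace (A * Matrix.of Z))) := by
        exact Finset.sum_congr rfl fun σ _ => by rw [key σ]
    _ = (2 * (π : ℂ) * I) ^ n *
          (∑ σ : Equiv.Perm (Fin n), ((Equiv.Perm.sign σ : ℤ) : ℂ) * ∏ i, A (σ i) i) *
          Complex.exp ((π : ℂ) * I * Matrix.trace (A * Matrix.of Z)) := by
        simp only [Finset.mul_sum, Finset.sum_mul]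
        exact Finset.sum_congr rfl fun σ _ => by ring
    _ = (2 * (π : ℂ) * I) ^ n * A.det *
          Complex.exp ((π : ℂ) * I * Matrix.trace (A * Matrix.of Z)) := by
        rw [Matrix.det_apply]
        simp only [Units.smul_def, zsmul_eq_mul]

end
end

section
/- Let m be a positive integer and let G ∈ M_{2m,2} be a matrix of real variables g_{ij} (1 ≤ i ≤ 2m, 1 ≤ j ≤ 2). Then the following polynomial identities hold: Δ_G( det(GᵗG) ) = 4(m − 1/2) tr(GᵗG) and (∇_G( det(GᵗG) ))² = 4 tr(GᵗG) det(GᵗG), where Δ_G = Σ_{i,j} ∂²/∂g_{ij}² and (∇_G f)² = Σ_{i,j} (∂f/∂g_{ij})². -/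
open MvPolynomial Matrix

noncomputable section

/-- The `2 × 2` matrix of polynomials `GᵗG`, where `G ∈ M_{2m,2}` is a matrix of
variables `g_{ij}`. -/
def gtg (m : ℕ) : Matrix (Fin 2) (Fin 2) (MvPolynomial (Fin (2 * m) × Fin 2) ℝ) :=
  Matrix.of fun a b => ∑ i : Fin (2 * m), X (i, a) * X (i, b)

lemma pd_sum_mul (m : ℕ) (k : Fin (2*m)) (c a b : Fin 2) :
    pderiv (k,c) (∑ i : Fin (2*m), X (i,a) * X (i,b) : MvPolynomial (Fin (2*m) × Fin 2) ℝ)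
      = (if a = c then X (k,b) else 0) + (if b = c then X (k,a) else 0) := by
  rw [map_sum]
  have h : ∀ i : Fin (2*m),
      pderiv (k,c) (X (i,a) * X (i,b) : MvPolynomial (Fin (2*m) × Fin 2) ℝ)
        = (if i = k ∧ a = c then X (i,b) else 0) + (if i = k ∧ b = c then X (i,a) else 0) := by
    intro i
    rw [pderiv_mul]
    simp only [pderiv_X, Pi.single_apply, Prod.mk.injEq, ← Prod.ext_iff]
    split_ifs <;> simp_all [eq_comm, mul_comm]
  rw [Finset.sum_congr rfl fun i _ => h i, Finset.sum_add_distrib]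
  congr 1
  · by_cases hc : a = c <;> simp [hc]
  · by_cases hc : b = c <;> simp [hc]

/-- **Laplacian and gradient identities for `det(GᵗG)`** (from the proof of
Proposition 1 of Choie-Eholzer): for `G ∈ M_{2m,2}` a matrix of variables,
`Δ_G(det(GᵗG)) = 4(m−1/2) tr(GᵗG)` and `(∇_G(det(GᵗG)))² = 4 tr(GᵗG) det(GᵗG)`. -/
theorem laplacian_gradSq_det_gtg (m : ℕ) (hm : 0 < m) :
    (∑ q : Fin (2 * m) × Fin 2, pderiv q (pderiv q (gtg m).det)) =
        C (4 * ((m : ℝ) - 1/2)) * Matrix.trace (gtg m) ∧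
      (∑ q : Fin (2 * m) × Fin 2, pderiv q (gtg m).det * pderiv q (gtg m).det) =
        C 4 * Matrix.trace (gtg m) * (gtg m).det := by
  set A : MvPolynomial (Fin (2*m) × Fin 2) ℝ := ∑ i : Fin (2*m), X (i,(0:Fin 2)) * X (i,0) with hA
  set B : MvPolynomial (Fin (2*m) × Fin 2) ℝ := ∑ i : Fin (2*m), X (i,(1:Fin 2)) * X (i,1) with hB
  set S : MvPolynomial (Fin (2*m) × Fin 2) ℝ := ∑ i : Fin (2*m), X (i,(0:Fin 2)) * X (i,1) with hS
  have hdet : (gtg m).det = A * B - S * S := by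
    rw [Matrix.det_fin_two]
    simp only [gtg, Matrix.of_apply]
    rw [Finset.sum_congr rfl fun i _ => mul_comm (X (i,(1:Fin 2))) (X (i,0))]
  have htr : Matrix.trace (gtg m) = A + B := by
    simp [Matrix.trace, gtg, Fin.sum_univ_two, hA, hB]
  -- first derivatives of A, B, S
  have pdA0 : ∀ k, pderiv (k,(0:Fin 2)) A = 2 * X (k,0) := by
    intro k; rw [hA, pd_sum_mul]; norm_num; ring
  have pdA1 : ∀ k, pderiv (k,(1:Fin 2)) A = 0 := by
    intro k; rw [hA, pd_sum_mul]; norm_num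
  have pdB0 : ∀ k, pderiv (k,(0:Fin 2)) B = 0 := by
    intro k; rw [hB, pd_sum_mul]; norm_num
  have pdB1 : ∀ k, pderiv (k,(1:Fin 2)) B = 2 * X (k,1) := by
    intro k; rw [hB, pd_sum_mul]; norm_num; ring
  have pdS0 : ∀ k, pderiv (k,(0:Fin 2)) S = X (k,1) := by
    intro k; rw [hS, pd_sum_mul]; norm_num
  have pdS1 : ∀ k, pderiv (k,(1:Fin 2)) S = X (k,0) := by
    intro k; rw [hS, pd_sum_mul]; norm_num
  have px01 : ∀ k, pderiv (k,(0:Fin 2)) (X (k,(1:Fin 2)) : MvPolynomial (Fin (2*m) × Fin 2) ℝ) = 0 :=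
    fun k => pderiv_X_of_ne (by simp)
  have px10 : ∀ k, pderiv (k,(1:Fin 2)) (X (k,(0:Fin 2)) : MvPolynomial (Fin (2*m) × Fin 2) ℝ) = 0 :=
    fun k => pderiv_X_of_ne (by simp)
  -- first derivatives of det
  have hd0 : ∀ k, pderiv (k,(0:Fin 2)) ((gtg m).det) = 2 * X (k,0) * B - 2 * S * X (k,1) := by
    intro k
    rw [hdet, map_sub, pderiv_mul, pderiv_mul, pdA0, pdB0, pdS0]
    ring
  have hd1 : ∀ k, pderiv (k,(1:Fin 2)) ((gtg m).det) = 2 * A * X (k,1) - 2 * S * X (k,0) := by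
    intro k
    rw [hdet, map_sub, pderiv_mul, pderiv_mul, pdA1, pdB1, pdS1]
    ring
  have p2 : ∀ (q : Fin (2*m) × Fin 2), pderiv q (2 : MvPolynomial (Fin (2*m) × Fin 2) ℝ) = 0 := by
    intro q; rw [← map_ofNat (C : ℝ →+* MvPolynomial (Fin (2*m) × Fin 2) ℝ) 2, pderiv_C]
  constructor
  · rw [Fintype.sum_prod_type]
    simp only [Fin.sum_univ_two]
    have key : ∀ k : Fin (2*m), pderiv (k,(0:Fin 2)) (pderiv (k,(0:Fin 2)) ((gtg m).det))
        + pderiv (k,(1:Fin 2)) (pderiv (k,(1:Fin 2)) ((gtg m).det))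
        = (X (k,(0:Fin 2)) * X (k,0)) * (-2) + ((X (k,(1:Fin 2)) * X (k,1)) * (-2) + (2*A + 2*B)) := by
      intro k
      rw [hd0, hd1, map_sub, map_sub, pderiv_mul, pderiv_mul, pderiv_mul, pderiv_mul,
        pderiv_mul, pderiv_mul, pderiv_mul, pderiv_mul]
      rw [pdA1, pdB0, pdS0, pdS1, px01, px10, pderiv_X_self, pderiv_X_self]
      simp only [p2]
      ring
    rw [Finset.sum_congr rfl fun k _ => key k, Finset.sum_add_distrib, Finset.sum_add_distrib,
      ← Finset.sum_mul, ← Finset.sum_mul, ← hA, ← hB, Finset.sum_const, Finset.card_univ,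
      Fintype.card_fin, htr, nsmul_eq_mul]
    have hC : (C (4 * ((m:ℝ) - 1/2)) : MvPolynomial (Fin (2*m) × Fin 2) ℝ)
        = ((2*m : ℕ) : MvPolynomial (Fin (2*m) × Fin 2) ℝ) * 2 - 2 := by
      have h4 : (4:ℝ) * ((m:ℝ) - 1/2) = ((2*m : ℕ) : ℝ) * 2 - 2 := by push_cast; ring
      rw [h4, map_sub, _root_.map_mul, map_natCast, map_ofNat]
    rw [hC]; ring
  · rw [Fintype.sum_prod_type]
    simp only [Fin.sum_univ_two]
    have key : ∀ k : Fin (2*m),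
        pderiv (k,(0:Fin 2)) ((gtg m).det) * pderiv (k,(0:Fin 2)) ((gtg m).det)
        + pderiv (k,(1:Fin 2)) ((gtg m).det) * pderiv (k,(1:Fin 2)) ((gtg m).det)
        = (X (k,(0:Fin 2)) * X (k,0)) * (4*B*B + 4*S*S)
          + ((X (k,(0:Fin 2)) * X (k,1)) * (-(8*B*S) - 8*A*S)
            + (X (k,(1:Fin 2)) * X (k,1)) * (4*A*A + 4*S*S)) := by
      intro k
      rw [hd0, hd1]; ring
    rw [Finset.sum_congr rfl fun k _ => key k, Finset.sum_add_distrib, Finset.sum_add_distrib,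
      ← Finset.sum_mul, ← Finset.sum_mul, ← Finset.sum_mul, ← hA, ← hB, ← hS, htr, hdet]
    rw [show (C 4 : MvPolynomial (Fin (2*m) × Fin 2) ℝ) = 4 from map_ofNat C 4]
    ring

end
end

section
/- Let m be a positive integer, let Q be a spherical polynomial of weight d in the matrix variable G ∈ M_{2m,2}, and let G' ∈ M_{2m',2} be a further matrix of independent variables. Then ∇_G(Q(G)) · ∇_G( det(GᵗG) ) = 2d · Q(G) · tr(GᵗG) and ∇_G(Q(G)) · ∇_G( det(GᵗG + G'ᵗG') ) = 2d · Q(G) · tr(GᵗG + G'ᵗG'), where ∇_G f · ∇_G h = Σ_{i,j} (∂f/∂g_{ij})(∂h/∂g_{ij}). -/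
open MvPolynomial Matrix

noncomputable section

/-- A spherical polynomial of weight `w` in a matrix variable `X ∈ M_{m,n}`:
a polynomial in the entries of `X` with `P(XA) = det(A)^w P(X)` for all `A ∈ M_{n,n}`
and with vanishing Laplacian. -/
def IsSpherical {R : Type*} [CommRing R] (m n w : ℕ)
    (P : MvPolynomial (Fin m × Fin n) R) : Prop :=
  (∀ (X : Matrix (Fin m) (Fin n) R) (A : Matrix (Fin n) (Fin n) R),
    MvPolynomial.eval (fun q : Fin m × Fin n => (X * A) q.1 q.2) P =
      A.det ^ w * MvPolynomial.eval (fun q : Fin m × Fin n => X q.1 q.2) P) ∧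
  ∑ q : Fin m × Fin n, MvPolynomial.pderiv q (MvPolynomial.pderiv q P) = 0

/-- The `2 × 2` matrix of polynomials `GᵗG`, where `G ∈ M_{2m,2}` is the first matrix of
variables in the combined variable set. -/
def gtgL (m m' : ℕ) :
    Matrix (Fin 2) (Fin 2)
      (MvPolynomial ((Fin (2 * m) × Fin 2) ⊕ (Fin (2 * m') × Fin 2)) ℝ) :=
  Matrix.of fun a b => ∑ i : Fin (2 * m), X (Sum.inl (i, a)) * X (Sum.inl (i, b))

/-- The `2 × 2` matrix of polynomials `G'ᵗG'`, where `G' ∈ M_{2m',2}` is the second matrix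
of variables in the combined variable set. -/
def gtgR (m m' : ℕ) :
    Matrix (Fin 2) (Fin 2)
      (MvPolynomial ((Fin (2 * m) × Fin 2) ⊕ (Fin (2 * m') × Fin 2)) ℝ) :=
  Matrix.of fun a b => ∑ i : Fin (2 * m'), X (Sum.inr (i, a)) * X (Sum.inr (i, b))

/-! ### Auxiliary lemmas -/

lemma my_eval_bind₁ {σ τ : Type*} (x : τ → ℝ) (f : σ → MvPolynomial τ ℝ)
    (p : MvPolynomial σ ℝ) :
    eval x (bind₁ f p) = eval (fun i => eval x (f i)) p :=
  eval₂Hom_bind₁ _ _ _ _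

/-- Chain rule for `bind₁` substitution. -/
lemma pderiv_bind₁ {σ τ : Type*} [Fintype σ] [DecidableEq σ] [DecidableEq τ]
    (f : σ → MvPolynomial τ ℝ) (j : τ) (p : MvPolynomial σ ℝ) :
    pderiv j (bind₁ f p) = ∑ i, bind₁ f (pderiv i p) * pderiv j (f i) := by
  induction p using MvPolynomial.induction_on with
  | C a => simp
  | add p q hp hq => simp [hp, hq, add_mul, Finset.sum_add_distrib]
  | mul_X p i hp =>
    have key : ∀ i' : σ, bind₁ f (pderiv i' (p * X i)) * pderiv j (f i')
        = bind₁ f (pderiv i' p) * pderiv j (f i') * f i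
          + (if i' = i then bind₁ f p * pderiv j (f i) else 0) := by
      intro i'
      by_cases h : i' = i <;>
        (simp [pderiv_mul, h, Pi.single_apply]; ring)
    rw [Finset.sum_congr rfl fun i' _ => key i', Finset.sum_add_distrib,
      Finset.sum_ite_eq' Finset.univ i, _root_.map_mul, bind₁_X_right, pderiv_mul, hp,
      Finset.sum_mul]
    simp

lemma pderiv_inr_rename_inl {σ τ : Type*} [DecidableEq σ] [DecidableEq τ]
    (p : MvPolynomial σ ℝ) (t : τ) :
    pderiv (Sum.inr t) (rename (Sum.inl : σ → σ ⊕ τ) p) = 0 := by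
  induction p using MvPolynomial.induction_on with
  | C a => simp
  | add p q hp hq => simp [hp, hq]
  | mul_X p i hp => simp [pderiv_mul, hp]

private def ef (n : ℕ) : Fin n × Fin 2 → MvPolynomial ((Fin n × Fin 2) ⊕ (Fin 2 × Fin 2)) ℝ :=
  fun q => ∑ c : Fin 2, X (Sum.inl (q.1, c)) * X (Sum.inr (c, q.2))

private def eYd (n : ℕ) : MvPolynomial ((Fin n × Fin 2) ⊕ (Fin 2 × Fin 2)) ℝ :=
  X (Sum.inr (0, 0)) * X (Sum.inr (1, 1)) - X (Sum.inr (0, 1)) * X (Sum.inr (1, 0))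

private def eg (n : ℕ) : ((Fin n × Fin 2) ⊕ (Fin 2 × Fin 2)) → MvPolynomial (Fin n × Fin 2) ℝ :=
  Sum.elim X (fun p => if p.1 = p.2 then 1 else 0)

/-- Euler-type identity for polynomials transforming with `det^d`. -/
lemma euler (n d : ℕ) (Q : MvPolynomial (Fin n × Fin 2) ℝ)
    (hQ : ∀ (Xm : Matrix (Fin n) (Fin 2) ℝ) (A : Matrix (Fin 2) (Fin 2) ℝ),
      eval (fun q : Fin n × Fin 2 => (Xm * A) q.1 q.2) Q
        = A.det ^ d * eval (fun q : Fin n × Fin 2 => Xm q.1 q.2) Q)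
    (a b : Fin 2) :
    (∑ i : Fin n, X (i, a) * pderiv (i, b) Q)
      = if a = b then C (d : ℝ) * Q else 0 := by
  classical
  have hpoly : bind₁ (ef n) Q = eYd n ^ d * rename Sum.inl Q := by
    apply MvPolynomial.funext
    intro x
    rw [my_eval_bind₁]
    have h1 : (fun i : Fin n × Fin 2 => eval x (ef n i))
        = fun q : Fin n × Fin 2 => ((Matrix.of fun i j => x (Sum.inl (i, j))) *
            (Matrix.of fun u v => x (Sum.inr (u, v)))) q.1 q.2 := by
      funext q
      simp [ef, Matrix.mul_apply]
    have e1 : eval x (eYd n)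
        = Matrix.det (Matrix.of fun u v => x (Sum.inr (u, v))) := by
      simp [eYd, Matrix.det_fin_two]
    rw [h1, hQ, _root_.map_mul, map_pow, eval_rename, e1]
    rfl
  have hgf : ∀ p : MvPolynomial (Fin n × Fin 2) ℝ, bind₁ (eg n) (bind₁ (ef n) p) = p := by
    intro p
    rw [bind₁_bind₁]
    have h2 : (fun i : Fin n × Fin 2 => bind₁ (eg n) (ef n i)) = X := by
      funext q
      simp only [ef, map_sum, _root_.map_mul, bind₁_X_right, eg, Sum.elim_inl, Sum.elim_inr]
      rw [Finset.sum_congr rfl (fun c _ => by rw [mul_ite, mul_one, mul_zero]),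
        Finset.sum_ite_eq' Finset.univ q.2 (fun c => X (q.1, c))]
      simp
    rw [h2]
    simp [bind₁_X_left]
  have hfq : ∀ q : Fin n × Fin 2, bind₁ (eg n) (pderiv (Sum.inr (a, b)) (ef n q))
      = if q.2 = b then X (q.1, a) else 0 := by
    intro q
    by_cases hb : q.2 = b
    · fin_cases a <;> simp [ef, eg, pderiv_mul, Pi.single_apply, Prod.ext_iff, hb]
    · simp [ef, eg, pderiv_mul, Pi.single_apply, Prod.ext_iff, hb]
  have h3 := congrArg (bind₁ (eg n)) (congrArg (pderiv (Sum.inr (a, b))) hpoly)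
  rw [pderiv_bind₁] at h3
  rw [map_sum] at h3
  simp only [_root_.map_mul, hgf, hfq] at h3
  have hL : (∑ q : Fin n × Fin 2, pderiv q Q * (if q.2 = b then X (q.1, a) else 0))
      = ∑ i : Fin n, X (i, a) * pderiv (i, b) Q := by
    rw [Fintype.sum_prod_type]
    refine Finset.sum_congr rfl fun i _ => ?_
    rw [Finset.sum_congr rfl (fun c _ => by rw [mul_ite, mul_zero]),
      Finset.sum_ite_eq' Finset.univ b (fun c => pderiv (i, c) Q * X (i, a))]
    simp [mul_comm]
  rw [hL] at h3
  rw [h3]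
  rw [pderiv_mul, pderiv_inr_rename_inl, mul_zero, add_zero, pderiv_pow]
  rw [_root_.map_mul, _root_.map_mul, _root_.map_mul, map_pow]
  have hYd1 : bind₁ (eg n) (eYd n) = 1 := by
    simp [eYd, eg]
  have hQid : bind₁ (eg n) (rename (Sum.inl : (Fin n × Fin 2) → _) Q) = Q := by
    rw [bind₁_rename]
    have : (eg n ∘ Sum.inl) = X := rfl
    rw [this]
    simp [bind₁_X_left]
  have hdelta : bind₁ (eg n) (pderiv (Sum.inr (a, b)) (eYd n))
      = if a = b then 1 else 0 := by
    fin_cases a <;> fin_cases b <;>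
      simp [eYd, eg, pderiv_X, Pi.single_apply, Prod.ext_iff]
  rw [hYd1, hQid, hdelta]
  have hd : bind₁ (eg n) (d : MvPolynomial ((Fin n × Fin 2) ⊕ (Fin 2 × Fin 2)) ℝ)
      = C (d : ℝ) := by
    simp
  rw [hd]
  by_cases hab : a = b <;> simp [hab]

/-- Gradient dot gradient-of-determinant, given the "Euler" values of the mixed sums. -/
lemma final_step {σ ι : Type*} [Fintype ι] [DecidableEq σ]
    (M : Matrix (Fin 2) (Fin 2) (MvPolynomial σ ℝ)) (F : ι → MvPolynomial σ ℝ)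
    (e : ι → σ) (R : MvPolynomial σ ℝ) (c : ℝ)
    (hT : ∀ a b : Fin 2,
      (∑ q : ι, F q * pderiv (e q) (M a b)) = if a = b then C (2 * c) * R else 0) :
    (∑ q : ι, F q * pderiv (e q) M.det) = C (2 * c) * R * M.trace := by
  have hdet : M.det = M 0 0 * M 1 1 - M 0 1 * M 1 0 := Matrix.det_fin_two M
  have expand : ∀ q : ι, F q * pderiv (e q) M.det
      = (F q * pderiv (e q) (M 0 0)) * M 1 1 + M 0 0 * (F q * pderiv (e q) (M 1 1))
        - ((F q * pderiv (e q) (M 0 1)) * M 1 0 + M 0 1 * (F q * pderiv (e q) (M 1 0))) := by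
    intro q; rw [hdet, map_sub, pderiv_mul, pderiv_mul]; ring
  rw [Finset.sum_congr rfl fun q _ => expand q, Finset.sum_sub_distrib,
    Finset.sum_add_distrib, Finset.sum_add_distrib, ← Finset.sum_mul, ← Finset.mul_sum,
    ← Finset.sum_mul, ← Finset.mul_sum, hT, hT, hT, hT, Matrix.trace_fin_two]
  have h01 : (0 : Fin 2) ≠ 1 := by decide
  have h10 : (1 : Fin 2) ≠ 0 := by decide
  rw [if_pos rfl, if_pos rfl, if_neg h01, if_neg h10]
  ring

/-- **Gradient identities for spherical polynomials** (from the proof of Proposition 1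
of Choie-Eholzer): for a spherical polynomial `Q` of weight `d` in `G ∈ M_{2m,2}` and a
further matrix of independent variables `G' ∈ M_{2m',2}`:
`∇_G(Q(G)) · ∇_G(det(GᵗG)) = 2d Q(G) tr(GᵗG)` and
`∇_G(Q(G)) · ∇_G(det(GᵗG+G'ᵗG')) = 2d Q(G) tr(GᵗG+G'ᵗG')`. -/
theorem grad_spherical_dot_grad_det (m m' : ℕ) (hm : 0 < m) (d : ℕ)
    (Q : MvPolynomial (Fin (2 * m) × Fin 2) ℝ) (hQ : IsSpherical (2 * m) 2 d Q) :
    ((∑ q : Fin (2 * m) × Fin 2, pderiv q Q * pderiv q (gtg m).det) =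
        C (2 * (d : ℝ)) * Q * Matrix.trace (gtg m)) ∧
      ((∑ q : Fin (2 * m) × Fin 2,
          pderiv (Sum.inl q) (rename Sum.inl Q) *
            pderiv (Sum.inl q) (gtgL m m' + gtgR m m').det) =
        C (2 * (d : ℝ)) * rename Sum.inl Q * Matrix.trace (gtgL m m' + gtgR m m')) := by
  classical
  obtain ⟨hQ1, -⟩ := hQ
  have heul := euler (2 * m) d Q hQ1
  have hC2 : C (2 * (d : ℝ)) = (C (d : ℝ) + C (d : ℝ) : MvPolynomial (Fin (2 * m) × Fin 2) ℝ) := by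
    rw [← map_add, ← two_mul]
  constructor
  · -- first identity
    apply final_step (gtg m) (fun q => pderiv q Q) (fun q => q) Q (d : ℝ)
    intro a b
    have hpd : ∀ q : Fin (2 * m) × Fin 2, pderiv q (gtg m a b)
        = (if a = q.2 then X (q.1, b) else 0) + (if b = q.2 then X (q.1, a) else 0) := by
      rintro ⟨j, c⟩
      by_cases h1 : a = c <;> by_cases h2 : b = c <;>
        simp [gtg, h1, h2, pderiv_mul, Pi.single_apply, Prod.ext_iff, Finset.sum_add_distrib]
    have key : ∀ u v : Fin 2,
        (∑ q : Fin (2 * m) × Fin 2, pderiv q Q * (if u = q.2 then X (q.1, v) else 0))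
          = if v = u then C (d : ℝ) * Q else 0 := by
      intro u v
      rw [Fintype.sum_prod_type]
      have h4 : ∀ i : Fin (2 * m),
          (∑ c : Fin 2, pderiv (i, c) Q * (if u = c then X (i, v) else 0))
            = X (i, v) * pderiv (i, u) Q := by
        intro i
        rw [Finset.sum_congr rfl (fun c _ => by rw [mul_ite, mul_zero]),
          Finset.sum_ite_eq Finset.univ u (fun c => pderiv (i, c) Q * X (i, v))]
        simp [mul_comm]
      rw [Finset.sum_congr rfl fun i _ => h4 i, heul]
    have h5 : ∀ q : Fin (2 * m) × Fin 2, pderiv q Q * pderiv q (gtg m a b)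
        = pderiv q Q * (if a = q.2 then X (q.1, b) else 0)
          + pderiv q Q * (if b = q.2 then X (q.1, a) else 0) := by
      intro q; rw [hpd q, mul_add]
    rw [Finset.sum_congr rfl fun q _ => h5 q, Finset.sum_add_distrib, key a b, key b a]
    by_cases hab : a = b
    · subst hab; simp only [eq_self_iff_true, if_true, hC2]; ring
    · rw [if_neg (fun h => hab h.symm), if_neg hab, if_neg hab, add_zero]
  · -- second identity
    apply final_step (gtgL m m' + gtgR m m')
      (fun q => pderiv (Sum.inl q) (rename Sum.inl Q)) Sum.inl (rename Sum.inl Q) (d : ℝ)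
    intro a b
    have hpd : ∀ q : Fin (2 * m) × Fin 2, pderiv (Sum.inl q) ((gtgL m m' + gtgR m m') a b)
        = (if a = q.2 then X (Sum.inl (q.1, b)) else 0)
          + (if b = q.2 then X (Sum.inl (q.1, a)) else 0) := by
      rintro ⟨j, c⟩
      by_cases h1 : a = c <;> by_cases h2 : b = c <;>
        simp [gtgL, gtgR, Matrix.add_apply, h1, h2, pderiv_mul, Pi.single_apply,
          Prod.ext_iff, Finset.sum_add_distrib]
    have heul2 : ∀ u v : Fin 2,
        (∑ i : Fin (2 * m),
            (X (Sum.inl (i, u)) :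
                MvPolynomial ((Fin (2 * m) × Fin 2) ⊕ (Fin (2 * m') × Fin 2)) ℝ)
              * pderiv (Sum.inl (i, v)) (rename Sum.inl Q))
          = if u = v then C (d : ℝ) * rename Sum.inl Q else 0 := by
      intro u v
      have h6 : ∀ i : Fin (2 * m),
          X (Sum.inl (i, u)) * pderiv (Sum.inl (i, v))
              (rename (Sum.inl : (Fin (2 * m) × Fin 2) → (Fin (2 * m) × Fin 2) ⊕ (Fin (2 * m') × Fin 2)) Q)
            = rename (Sum.inl : (Fin (2 * m) × Fin 2) → (Fin (2 * m) × Fin 2) ⊕ (Fin (2 * m') × Fin 2)) (X (i, u) * pderiv (i, v) Q) := by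
        intro i
        rw [_root_.map_mul, rename_X, pderiv_rename Sum.inl_injective]
      rw [Finset.sum_congr rfl fun i _ => h6 i, ← map_sum, heul u v]
      by_cases huv : u = v <;> simp [huv]
    have key : ∀ u v : Fin 2,
        (∑ q : Fin (2 * m) × Fin 2,
            (pderiv (Sum.inl q) (rename Sum.inl Q) :
                MvPolynomial ((Fin (2 * m) × Fin 2) ⊕ (Fin (2 * m') × Fin 2)) ℝ)
            * (if u = q.2 then X (Sum.inl (q.1, v)) else 0))
          = if v = u then C (d : ℝ) * rename Sum.inl Q else 0 := by
      intro u v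
      rw [Fintype.sum_prod_type]
      have h4 : ∀ i : Fin (2 * m),
          (∑ c : Fin 2,
              (pderiv (Sum.inl (i, c)) (rename Sum.inl Q) :
                  MvPolynomial ((Fin (2 * m) × Fin 2) ⊕ (Fin (2 * m') × Fin 2)) ℝ)
              * (if u = c then X (Sum.inl (i, v)) else 0))
            = X (Sum.inl (i, v)) * pderiv (Sum.inl (i, u)) (rename Sum.inl Q) := by
        intro i
        rw [Finset.sum_congr rfl (fun c _ => by rw [mul_ite, mul_zero]),
          Finset.sum_ite_eq Finset.univ u
            (fun c => pderiv (Sum.inl (i, c)) (rename Sum.inl Q) * X (Sum.inl (i, v)))]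
        simp [mul_comm]
      rw [Finset.sum_congr rfl fun i _ => h4 i, heul2 v u]
    have h5 : ∀ q : Fin (2 * m) × Fin 2,
        pderiv (Sum.inl q) (rename Sum.inl Q) * pderiv (Sum.inl q) ((gtgL m m' + gtgR m m') a b)
          = pderiv (Sum.inl q) (rename Sum.inl Q) * (if a = q.2 then X (Sum.inl (q.1, b)) else 0)
            + pderiv (Sum.inl q) (rename Sum.inl Q)
              * (if b = q.2 then X (Sum.inl (q.1, a)) else 0) := by
      intro q; rw [hpd q, mul_add]
    rw [Finset.sum_congr rfl fun q _ => h5 q, Finset.sum_add_distrib, key a b, key b a]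
    have hC2' : C (2 * (d : ℝ))
        = (C (d : ℝ) + C (d : ℝ) :
            MvPolynomial ((Fin (2 * m) × Fin 2) ⊕ (Fin (2 * m') × Fin 2)) ℝ) := by
      rw [← map_add, ← two_mul]
    by_cases hab : a = b
    · subst hab; simp only [eq_self_iff_true, if_true, hC2']; ring
    · rw [if_neg (fun h => hab h.symm), if_neg hab, if_neg hab, add_zero]

end
end
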